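/- Let T: 𝒜 → 𝒜 be a linear map which preserves power inner products, and for a measurable set I ⊆ ℝ^d of finite Lebesgue measure let τ(I) := {x ∈ ℝ^d : (Tχ_I)(x) ≠ 0}, where χ_I is the indicator of I. Then there exists a single measurable function α: ℝ^d → ℝ such that for every measurable I ⊆ ℝ^d of finite Lebesgue measure, Tχ_I = e^{iα}·χ_{τ(I)} almost everywhere, and |τ(I)| = |I|. -/

import Mathlib

open MeasureTheory Complex Finset
open scoped Nat ENNReal

noncomputable section

/-- The domain `ℝ^d`. -/
abbrev Dom (d : ℕ) := Fin d → ℝ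

/-- Membership in `𝒜 = L²(ℝ^d) ∩ L^∞(ℝ^d)`. -/
def MemA (d : ℕ) (f : Dom d → ℂ) : Prop :=
  MemLp f 2 (volume : Measure (Dom d)) ∧ MemLp f ⊤ (volume : Measure (Dom d))

/-- `⟨f^k, g^k⟩`, the power inner products. -/
def pip (d : ℕ) (f g : Dom d → ℂ) (k : ℕ) : ℂ :=
  ∫ x : Dom d, (starRingEnd ℂ) (f x) ^ k * g x ^ k

/-- `S_n(f,g)`, the inner product of quadratic `n`-particle vectors. -/
def Sker (c : ℝ) (d : ℕ) (f g : Dom d → ℂ) (n : ℕ) : ℂ :=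
  ∑ p : Nat.Partition n,
    (n ! : ℂ) ^ 2 * 2 ^ (2 * n - 1) *
      ∏ j ∈ p.parts.toFinset,
        (c : ℂ) ^ p.parts.count j /
            (((p.parts.count j)! : ℂ) * (j : ℂ) ^ p.parts.count j) *
          pip d f g j ^ p.parts.count j

/-- `K(f,g) = ⟨Ψ(f),Ψ(g)⟩`, the inner product of quadratic exponential vectors. -/
def Kker (c : ℝ) (d : ℕ) (f g : Dom d → ℂ) : ℂ :=
  Complex.exp (-(c / 2 : ℂ) *
    ∫ x : Dom d, Complex.log (1 - 4 * (starRingEnd ℂ) (f x) * g x))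


/-- The indicator function `χ_I` of a set `I ⊆ ℝ^d`, as an element of `𝒜`. -/
def chi (d : ℕ) (I : Set (Dom d)) : Dom d → ℂ := I.indicator 1

/-- `τ(I) = {x : (Tχ_I)(x) ≠ 0}`, the support of `Tχ_I`. -/
def tau (d : ℕ) (T : (Dom d → ℂ) → (Dom d → ℂ)) (I : Set (Dom d)) : Set (Dom d) :=
  {x | T (chi d I) x ≠ 0}

/-!
Write `u_I := Tχ_I`. Since `⟨u_I^k, u_I^k⟩ = |I|` for `k = 1, 2, 3`, the function
`w = |u_I|²` has `∫ w (w - 1)² = 0`, so `|u_I| ∈ {0, 1}` and `|τ(I)| = ∫ |u_I|² = |I|`.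
For disjoint `A, B` the identity `u_{A∪B} = u_A + u_B` then forces `τ(A)` and `τ(B)` to be
almost disjoint, hence `u_B = u_A` on `τ(A)` whenever `A ⊆ B`, and any two `u_I, u_J` agree
on `τ(I) ∩ τ(J)`. Gluing the `u_Q` over a countable
partition of `ℝ^d` into sets `Q` of finite measure gives a single measurable `F` with
`u_I = F` on `τ(I)` for every `I`, and `α := arg F`.
-/

theorem ae_eq_zero_or_one_of_integral_pow_eq {α : Type*} [MeasurableSpace α] {μ : Measure α}
    {w : α → ℝ} (hw : ∀ x, 0 ≤ w x) (h1 : Integrable w μ)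
    (h2 : Integrable (fun x => w x ^ 2) μ) (h3 : Integrable (fun x => w x ^ 3) μ)
    (h12 : ∫ x, w x ^ 2 ∂μ = ∫ x, w x ∂μ) (h23 : ∫ x, w x ^ 3 ∂μ = ∫ x, w x ^ 2 ∂μ) :
    ∀ᵐ x ∂μ, w x = 0 ∨ w x = 1 := by
  have hexpand : (fun x => w x * (w x - 1) ^ 2) = fun x => (w x ^ 3 - 2 * w x ^ 2) + w x := by
    ext x; ring
  have hint : Integrable (fun x => w x * (w x - 1) ^ 2) μ := by
    rw [hexpand]; exact (h3.sub (h2.const_mul 2)).add h1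
  have hzero : ∫ x, w x * (w x - 1) ^ 2 ∂μ = 0 := by
    have h32 : Integrable (fun x => w x ^ 3 - 2 * w x ^ 2) μ := h3.sub (h2.const_mul 2)
    rw [hexpand, integral_add h32 h1, integral_sub h3 (h2.const_mul 2), integral_const_mul, h23,
      h12]
    ring
  filter_upwards [(integral_eq_zero_iff_of_nonneg (fun x => mul_nonneg (hw x) (sq_nonneg _))
    hint).mp hzero] with x hx
  simpa [sub_eq_zero] using hx

variable {d : ℕ}

theorem memA_chi {I : Set (Dom d)} (hI : MeasurableSet I) (hIfin : volume I < ⊤) :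
    MemA d (chi d I) :=
  ⟨memLp_indicator_const _ hI 1 (Or.inr hIfin.ne), memLp_indicator_const _ hI 1 (Or.inr hIfin.ne)⟩

theorem MemA.memLp_pow_succ {f : Dom d → ℂ} (hf : MemA d f) (k : ℕ) :
    MemLp (fun x => f x ^ (k + 1)) 2 volume := by
  induction k with
  | zero => simpa using hf.1
  | succ k ih => simpa only [pow_succ'] using ih.mul' (r := 2) hf.2

theorem MemA.integrable_norm_pow {f : Dom d → ℂ} (hf : MemA d f) {k : ℕ} (hk : 1 ≤ k) :
    Integrable (fun x => ‖f x‖ ^ (2 * k)) volume := by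
  obtain ⟨k, rfl⟩ := Nat.exists_eq_add_of_le' hk
  have h := (memLp_two_iff_integrable_sq_norm (hf.memLp_pow_succ k).1).mp (hf.memLp_pow_succ k)
  simpa only [norm_pow, ← pow_mul, mul_comm] using h

theorem pip_self (f : Dom d → ℂ) (k : ℕ) :
    pip d f f k = ((∫ x, ‖f x‖ ^ (2 * k)) : ℝ) := by
  rw [pip, ← integral_complex_ofReal]
  congr 1 with x
  rw [← mul_pow, conj_mul', pow_mul]
  push_cast
  ring

theorem pip_chi_self {I : Set (Dom d)} (hI : MeasurableSet I) {k : ℕ} (hk : 1 ≤ k) :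
    pip d (chi d I) (chi d I) k = (volume I).toReal := by
  have hnorm : (fun x => ‖chi d I x‖ ^ (2 * k)) = I.indicator 1 := by
    ext x
    by_cases hx : x ∈ I <;> simp [chi, hx, show 2 * k ≠ 0 by omega]
  rw [pip_self, hnorm, integral_indicator_one hI, measureReal_def]

theorem chi_union {A B : Set (Dom d)} (hAB : Disjoint A B) :
    chi d (A ∪ B) = chi d A + chi d B :=
  Set.indicator_union_of_disjoint hAB 1

theorem apply_chi_union_ae_eq {T : (Dom d → ℂ) → (Dom d → ℂ)}
    (hTadd : ∀ f g, MemA d f → MemA d g → T (f + g) =ᵐ[volume] T f + T g)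
    {A B : Set (Dom d)} (hA : MeasurableSet A) (hB : MeasurableSet B)
    (hAfin : volume A < ⊤) (hBfin : volume B < ⊤) (hAB : Disjoint A B) :
    T (chi d (A ∪ B)) =ᵐ[volume] T (chi d A) + T (chi d B) := by
  rw [chi_union hAB]
  exact hTadd _ _ (memA_chi hA hAfin) (memA_chi hB hBfin)

structure PreservesPowerInner (d : ℕ) (T : (Dom d → ℂ) → (Dom d → ℂ)) : Prop where
  memA : ∀ f, MemA d f → MemA d (T f)
  pip_eq : ∀ k : ℕ, 1 ≤ k → ∀ f g, MemA d f → MemA d g → pip d (T f) (T g) k = pip d f g k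

namespace PreservesPowerInner

variable {T : (Dom d → ℂ) → (Dom d → ℂ)} {I A B : Set (Dom d)}

theorem integral_norm_pow (hT : PreservesPowerInner d T) (hI : MeasurableSet I)
    (hIfin : volume I < ⊤) {k : ℕ} (hk : 1 ≤ k) :
    ∫ x, ‖T (chi d I) x‖ ^ (2 * k) = (volume I).toReal := by
  have h := hT.pip_eq k hk _ _ (memA_chi hI hIfin) (memA_chi hI hIfin)
  rwa [pip_self, pip_chi_self hI hk, ofReal_inj] at h

theorem ae_eq_zero_or_norm_eq_one (hT : PreservesPowerInner d T) (hI : MeasurableSet I)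
    (hIfin : volume I < ⊤) :
    ∀ᵐ x, T (chi d I) x = 0 ∨ ‖T (chi d I) x‖ = 1 := by
  have hmem := hT.memA _ (memA_chi hI hIfin)
  have hmom : ∀ k, 1 ≤ k → Integrable (fun x => (‖T (chi d I) x‖ ^ 2) ^ k) ∧
      ∫ x, (‖T (chi d I) x‖ ^ 2) ^ k = (volume I).toReal := fun k hk => by
    simp only [← pow_mul]
    exact ⟨hmem.integrable_norm_pow hk, hT.integral_norm_pow hI hIfin hk⟩
  have h1 := hmom 1 le_rfl
  simp only [pow_one] at h1
  filter_upwards [ae_eq_zero_or_one_of_integral_pow_eq (fun x => by positivity) h1.1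
    (hmom 2 (by norm_num)).1 (hmom 3 (by norm_num)).1 ((hmom 2 (by norm_num)).2.trans h1.2.symm)
    ((hmom 3 (by norm_num)).2.trans (hmom 2 (by norm_num)).2.symm)] with x hx
  rcases hx with hx | hx
  · exact Or.inl (by simpa using hx)
  · exact Or.inr ((pow_eq_one_iff_of_nonneg (norm_nonneg _) two_ne_zero).mp hx)

theorem nullMeasurableSet_tau (hT : PreservesPowerInner d T) (hI : MeasurableSet I)
    (hIfin : volume I < ⊤) : NullMeasurableSet (tau d T I) volume :=
  (hT.memA _ (memA_chi hI hIfin)).1.1.aemeasurable.nullMeasurable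
    (measurableSet_singleton 0).compl

theorem volume_tau (hT : PreservesPowerInner d T) (hI : MeasurableSet I)
    (hIfin : volume I < ⊤) : volume (tau d T I) = volume I := by
  have hsq : (tau d T I).indicator 1 =ᵐ[volume] fun x => ENNReal.ofReal (‖T (chi d I) x‖ ^ 2) := by
    filter_upwards [hT.ae_eq_zero_or_norm_eq_one hI hIfin] with x hx
    by_cases hxτ : x ∈ tau d T I
    · simp [Set.indicator_of_mem hxτ, hx.resolve_left hxτ]
    · simp [Set.indicator_of_notMem hxτ, not_not.mp hxτ]
  have hint := (hT.memA _ (memA_chi hI hIfin)).integrable_norm_pow le_rfl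
  have hnorm := hT.integral_norm_pow hI hIfin le_rfl
  rw [mul_one] at hint hnorm
  calc volume (tau d T I) = ∫⁻ x, (tau d T I).indicator 1 x :=
        (lintegral_indicator_one₀ (hT.nullMeasurableSet_tau hI hIfin)).symm
    _ = ENNReal.ofReal (∫ x, ‖T (chi d I) x‖ ^ 2) :=
        (lintegral_congr_ae hsq).trans
          (ofReal_integral_eq_lintegral_ofReal hint (ae_of_all _ fun x => by positivity)).symm
    _ = volume I := by
        rw [hnorm, ENNReal.ofReal_toReal hIfin.ne]

/-- Otherwise `τ(A ∪ B) ⊆ τ(A) ∪ τ(B)` would have measure less than `|A| + |B|`. -/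
theorem aedisjoint_tau (hT : PreservesPowerInner d T)
    (hTadd : ∀ f g, MemA d f → MemA d g → T (f + g) =ᵐ[volume] T f + T g)
    (hA : MeasurableSet A) (hB : MeasurableSet B)
    (hAfin : volume A < ⊤) (hBfin : volume B < ⊤) (hAB : Disjoint A B) :
    AEDisjoint volume (tau d T A) (tau d T B) := by
  have hABfin : volume (A ∪ B) < ⊤ := measure_union_lt_top hAfin hBfin
  have hsub : tau d T (A ∪ B) ≤ᵐ[volume] (tau d T A ∪ tau d T B : Set (Dom d)) := by
    filter_upwards [apply_chi_union_ae_eq hTadd hA hB hAfin hBfin hAB] with x hx (hne : x ∈ tau d T (A ∪ B))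
    show x ∈ tau d T A ∪ tau d T B
    by_contra hnot
    rw [Set.mem_union, not_or] at hnot
    exact hne (by rw [hx, Pi.add_apply, not_not.mp hnot.1, not_not.mp hnot.2, add_zero])
  have hfin : volume (tau d T A ∪ tau d T B) ≠ ⊤ :=
    (measure_union_lt_top (by rwa [hT.volume_tau hA hAfin])
      (by rwa [hT.volume_tau hB hBfin])).ne
  have hle : volume (tau d T A ∪ tau d T B) + volume (tau d T A ∩ tau d T B) ≤
      volume (tau d T A ∪ tau d T B) + 0 :=
    calc _ = volume (tau d T A) + volume (tau d T B) :=
          measure_union_add_inter₀ _ (hT.nullMeasurableSet_tau hB hBfin)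
      _ = volume (A ∪ B) := by
          rw [hT.volume_tau hA hAfin, hT.volume_tau hB hBfin, measure_union hAB hB]
      _ = volume (tau d T (A ∪ B)) := (hT.volume_tau (hA.union hB) hABfin).symm
      _ ≤ volume (tau d T A ∪ tau d T B) := measure_mono_ae hsub
      _ = _ := (add_zero _).symm
  exact nonpos_iff_eq_zero.mp (ENNReal.le_of_add_le_add_left hfin hle)

theorem ae_apply_eq_of_subset (hT : PreservesPowerInner d T)
    (hTadd : ∀ f g, MemA d f → MemA d g → T (f + g) =ᵐ[volume] T f + T g)
    (hA : MeasurableSet A) (hB : MeasurableSet B) (hBfin : volume B < ⊤) (hAB : A ⊆ B) :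
    ∀ᵐ x, x ∈ tau d T A → T (chi d B) x = T (chi d A) x := by
  have hAfin : volume A < ⊤ := (measure_mono hAB).trans_lt hBfin
  have hdiff : volume (B \ A) < ⊤ := (measure_mono Set.sdiff_subset).trans_lt hBfin
  have hsplit := apply_chi_union_ae_eq hTadd hA (hB.diff hA) hAfin hdiff Set.disjoint_sdiff_right
  rw [Set.union_sdiff_cancel hAB] at hsplit
  filter_upwards [hsplit, measure_eq_zero_iff_ae_notMem.mp
    (hT.aedisjoint_tau hTadd hA (hB.diff hA) hAfin hdiff Set.disjoint_sdiff_right)]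
    with x hx hdisj hxA
  have hzero : T (chi d (B \ A)) x = 0 := not_not.mp fun hne => hdisj ⟨hxA, hne⟩
  simp [hx, hzero]

theorem ae_apply_eq_of_mem_tau_of_mem_tau (hT : PreservesPowerInner d T)
    (hTadd : ∀ f g, MemA d f → MemA d g → T (f + g) =ᵐ[volume] T f + T g)
    {J : Set (Dom d)} (hI : MeasurableSet I) (hJ : MeasurableSet J)
    (hIfin : volume I < ⊤) (hJfin : volume J < ⊤) :
    ∀ᵐ x, x ∈ tau d T I → x ∈ tau d T J → T (chi d I) x = T (chi d J) x := by
  have hIJfin : volume (I ∩ J) < ⊤ := (measure_mono Set.inter_subset_left).trans_lt hIfin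
  have hIJ : volume (I \ J) < ⊤ := (measure_mono Set.sdiff_subset).trans_lt hIfin
  have hJI : volume (J \ I) < ⊤ := (measure_mono Set.sdiff_subset).trans_lt hJfin
  have hsplitI := apply_chi_union_ae_eq hTadd (hI.inter hJ) (hI.diff hJ) hIJfin hIJ
    (Set.disjoint_sdiff_right.mono_left Set.inter_subset_right)
  rw [Set.inter_union_sdiff] at hsplitI
  have hsplitJ := apply_chi_union_ae_eq hTadd (hI.inter hJ) (hJ.diff hI) hIJfin hJI
    (Set.disjoint_sdiff_right.mono_left Set.inter_subset_left)
  rw [Set.inter_comm, Set.inter_union_sdiff] at hsplitJ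
  filter_upwards [hT.ae_apply_eq_of_subset hTadd (hI.inter hJ) hI hIfin Set.inter_subset_left,
    hT.ae_apply_eq_of_subset hTadd (hI.inter hJ) hJ hJfin Set.inter_subset_right,
    hsplitI, hsplitJ, measure_eq_zero_iff_ae_notMem.mp (hT.aedisjoint_tau hTadd (hI.diff hJ)
      (hJ.diff hI) hIJ hJI disjoint_sdiff_sdiff)] with x hxI hxJ hsI hsJ hdisj hxτI hxτJ
  by_cases hx : x ∈ tau d T (I ∩ J)
  · rw [hxI hx, hxJ hx]
  · have hzero : T (chi d (I ∩ J)) x = 0 := not_not.mp hx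
    refine (hdisj ⟨?_, ?_⟩).elim
    · simpa [tau, hsI, hzero] using hxτI
    · simpa [tau, hsJ, Set.inter_comm, hzero] using hxτJ

/-- The sets `τ(I ∩ Q n)` are almost disjoint subsets of `τ(I)` whose measures add up to
`|I| = |τ(I)|`. -/
theorem tau_ae_subset_iUnion (hT : PreservesPowerInner d T)
    (hTadd : ∀ f g, MemA d f → MemA d g → T (f + g) =ᵐ[volume] T f + T g)
    (hI : MeasurableSet I) (hIfin : volume I < ⊤) {Q : ℕ → Set (Dom d)}
    (hQm : ∀ n, MeasurableSet (Q n)) (hQdisj : Pairwise fun m n => Disjoint (Q m) (Q n))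
    (hQcover : ⋃ n, Q n = Set.univ) :
    tau d T I ≤ᵐ[volume] ⋃ n, tau d T (I ∩ Q n) := by
  have hfin : ∀ n, volume (I ∩ Q n) < ⊤ :=
    fun n => (measure_mono Set.inter_subset_left).trans_lt hIfin
  have hsub : (⋃ n, tau d T (I ∩ Q n)) ≤ᵐ[volume] tau d T I := by
    filter_upwards [ae_all_iff.mpr fun n =>
      hT.ae_apply_eq_of_subset hTadd (hI.inter (hQm n)) hI hIfin Set.inter_subset_left]
      with x hx hmem
    obtain ⟨n, hn⟩ := Set.mem_iUnion.mp hmem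
    show T (chi d I) x ≠ 0
    rw [hx n hn]
    exact hn
  have hvol : volume (tau d T I) = volume (⋃ n, tau d T (I ∩ Q n)) :=
    calc volume (tau d T I) = volume I := hT.volume_tau hI hIfin
      _ = volume (⋃ n, I ∩ Q n) := by rw [← Set.inter_iUnion, hQcover, Set.inter_univ]
      _ = ∑' n, volume (I ∩ Q n) :=
          measure_iUnion (fun m n hmn => (hQdisj hmn).mono Set.inter_subset_right
            Set.inter_subset_right) fun n => hI.inter (hQm n)
      _ = ∑' n, volume (tau d T (I ∩ Q n)) := by
          simp only [hT.volume_tau (hI.inter (hQm _)) (hfin _)]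
      _ = volume (⋃ n, tau d T (I ∩ Q n)) :=
          (measure_iUnion₀ (fun m n hmn => hT.aedisjoint_tau hTadd (hI.inter (hQm m))
            (hI.inter (hQm n)) (hfin m) (hfin n) ((hQdisj hmn).mono Set.inter_subset_right
              Set.inter_subset_right)) fun n => hT.nullMeasurableSet_tau (hI.inter (hQm n))
                (hfin n)).symm
  exact (ae_eq_of_ae_subset_of_measure_ge hsub hvol.le
    (NullMeasurableSet.iUnion fun n => hT.nullMeasurableSet_tau (hI.inter (hQm n)) (hfin n))
    (hT.volume_tau hI hIfin ▸ hIfin.ne)).symm.le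

theorem exists_measurable_eq_on_tau (hT : PreservesPowerInner d T)
    (hTadd : ∀ f g, MemA d f → MemA d g → T (f + g) =ᵐ[volume] T f + T g) :
    ∃ F : Dom d → ℂ, Measurable F ∧ ∀ I : Set (Dom d), MeasurableSet I → volume I < ⊤ →
      ∀ᵐ x, x ∈ tau d T I → T (chi d I) x = F x := by
  set Q := disjointed (spanningSets (volume : Measure (Dom d)))
  have hQm : ∀ n, MeasurableSet (Q n) := MeasurableSet.disjointed (measurableSet_spanningSets _)
  have hQfin : ∀ n, volume (Q n) < ⊤ := fun n =>
    (measure_mono (disjointed_subset _ n)).trans_lt (measure_spanningSets_lt_top _ n)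
  have hQdisj : Pairwise fun m n => Disjoint (Q m) (Q n) := disjoint_disjointed _
  have hQcover : ⋃ n, Q n = Set.univ := by rw [iUnion_disjointed, iUnion_spanningSets]
  have hrep : ∀ n, ∃ g : Dom d → ℂ, Measurable g ∧ T (chi d (Q n)) =ᵐ[volume] g := fun n =>
    let h := (hT.memA _ (memA_chi (hQm n) (hQfin n))).1.1.aemeasurable
    ⟨h.mk, h.measurable_mk, h.ae_eq_mk⟩
  choose g hgm hg using hrep
  obtain ⟨F, hFm, hF⟩ := exists_measurable_piecewise (disjointed fun n => {x | g n x ≠ 0})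
    (MeasurableSet.disjointed fun n => (hgm n (measurableSet_singleton 0)).compl) g hgm
    fun i j hij x hx => (Set.disjoint_iff.mp (disjoint_disjointed _ hij) hx).elim
  refine ⟨F, hFm, fun I hI hIfin => ?_⟩
  filter_upwards [hT.tau_ae_subset_iUnion hTadd hI hIfin hQm hQdisj hQcover,
    ae_all_iff.mpr fun n => hT.ae_apply_eq_of_subset hTadd (hI.inter (hQm n)) (hQm n) (hQfin n)
      Set.inter_subset_right,
    ae_all_iff.mpr hg,
    ae_all_iff.mpr fun n => hT.ae_apply_eq_of_mem_tau_of_mem_tau hTadd hI (hQm n) hIfin (hQfin n)]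
    with x hcov hsub hgx hphase hxI
  obtain ⟨m, hm⟩ := Set.mem_iUnion.mp (hcov hxI)
  have hsupp : x ∈ ⋃ n, {x | g n x ≠ 0} :=
    Set.mem_iUnion.mpr ⟨m, show g m x ≠ 0 by rw [← hgx m, hsub m hm]; exact hm⟩
  rw [← iUnion_disjointed] at hsupp
  obtain ⟨n, hn⟩ := Set.mem_iUnion.mp hsupp
  rw [hF n hn, ← hgx n]
  exact hphase n hxI (show T (chi d (Q n)) x ≠ 0 by rw [hgx n]; exact disjointed_subset _ n hn)

end PreservesPowerInner

theorem statement13_general (d : ℕ)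
    (T : (Dom d → ℂ) → (Dom d → ℂ))
    (hTmem : ∀ f, MemA d f → MemA d (T f))
    (hTadd : ∀ f g, MemA d f → MemA d g →
      T (f + g) =ᵐ[(volume : Measure (Dom d))] T f + T g)
    (hppip : ∀ k : ℕ, 1 ≤ k → ∀ f g, MemA d f → MemA d g →
      pip d (T f) (T g) k = pip d f g k) :
    ∃ α : Dom d → ℝ, Measurable α ∧
      ∀ I : Set (Dom d), MeasurableSet I → volume I < ⊤ →
        (T (chi d I) =ᵐ[(volume : Measure (Dom d))]
          fun x => Complex.exp (Complex.I * α x) * chi d (tau d T I) x) ∧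
        volume (tau d T I) = volume I := by
  have hT : PreservesPowerInner d T := ⟨hTmem, hppip⟩
  obtain ⟨F, hFm, hF⟩ := hT.exists_measurable_eq_on_tau hTadd
  refine ⟨fun x => arg (F x), measurable_arg.comp hFm,
    fun I hI hIfin => ⟨?_, hT.volume_tau hI hIfin⟩⟩
  filter_upwards [hF I hI hIfin, hT.ae_eq_zero_or_norm_eq_one hI hIfin] with x hFx hnorm
  by_cases hx : x ∈ tau d T I
  · have h := norm_mul_exp_arg_mul_I (T (chi d I) x)
    rw [hnorm.resolve_left hx, ofReal_one, one_mul, hFx hx] at h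
    have hchi : chi d (tau d T I) x = 1 := Set.indicator_of_mem hx 1
    rw [hchi, mul_one, hFx hx, mul_comm, h]
  · have hchi : chi d (tau d T I) x = 0 := Set.indicator_of_notMem hx 1
    rw [hchi, mul_zero]
    exact not_not.mp hx

/-- Lemma 13 of the paper: if the linear map `T : 𝒜 → 𝒜` preserves power
inner products, there is a single measurable phase `α : ℝ^d → ℝ` with
`Tχ_I = e^{iα} χ_{τ(I)}` a.e. and `|τ(I)| = |I|` for every measurable `I` of finite
measure. -/
theorem statement13 (d : ℕ) (hd : 1 ≤ d)
    (T : (Dom d → ℂ) → (Dom d → ℂ))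
    (hTmem : ∀ f, MemA d f → MemA d (T f))
    (hTae : ∀ f g, MemA d f → MemA d g → f =ᵐ[(volume : Measure (Dom d))] g →
      T f =ᵐ[(volume : Measure (Dom d))] T g)
    (hTadd : ∀ f g, MemA d f → MemA d g →
      T (f + g) =ᵐ[(volume : Measure (Dom d))] T f + T g)
    (hTsmul : ∀ (a : ℂ) (f : Dom d → ℂ), MemA d f →
      T (a • f) =ᵐ[(volume : Measure (Dom d))] a • T f)
    (hppip : ∀ k : ℕ, 1 ≤ k → ∀ f g, MemA d f → MemA d g →
      pip d (T f) (T g) k = pip d f g k) :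
    ∃ α : Dom d → ℝ, Measurable α ∧
      ∀ I : Set (Dom d), MeasurableSet I → volume I < ⊤ →
        (T (chi d I) =ᵐ[(volume : Measure (Dom d))]
          fun x => Complex.exp (Complex.I * α x) * chi d (tau d T I) x) ∧
        volume (tau d T I) = volume I :=
  statement13_general d T hTmem hTadd hppip
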